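/- Decay of the Glassey–Strauss electric bulk kernel: for every v ∈ ℝ³, every ω ∈ ℝ³ with |ω| = 1, and every i ∈ {1,2,3}, one has 1 + v̂·ω > 0 and | (|v̂|² − 1)(v̂ᵢ + ωᵢ) | / (1 + v̂·ω)² ≤ 4 √(1 + |v|²). -/

import Mathlib

open MeasureTheory Set

noncomputable section

/-- Physical space `ℝ³`, realized as functions `Fin 3 → ℝ`. -/
abbrev V3 : Type := Fin 3 → ℝ

/-- Euclidean inner product on `ℝ³`. -/
def dot3 (a b : V3) : ℝ := a 0 * b 0 + a 1 * b 1 + a 2 * b 2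

/-- Euclidean norm on `ℝ³`. -/
def enorm3 (a : V3) : ℝ := Real.sqrt (dot3 a a)

/-- Cross product on `ℝ³`. -/
def cross3 (a b : V3) : V3 :=
  ![a 1 * b 2 - a 2 * b 1, a 2 * b 0 - a 0 * b 2, a 0 * b 1 - a 1 * b 0]

/-- `⟨v⟩ = √(1 + |v|²)`. -/
def jap (v : V3) : ℝ := Real.sqrt (1 + dot3 v v)

/-- Relativistic velocity `v̂ = v / ⟨v⟩`. -/
def vhat (v : V3) : V3 := (jap v)⁻¹ • v

/-- The open upper half space `Ω = {x ∈ ℝ³ : x₃ > 0}`. -/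
def halfSpace : Set V3 := {x : V3 | 0 < x 2}

/-- Embedding of the boundary `∂Ω ≃ ℝ²` into `ℝ³`. -/
def bdryPt (y : ℝ × ℝ) : V3 := ![y.1, y.2, 0]

/-- Projection `(x₁,x₂,x₃) ↦ (x₁,x₂,0)` onto the boundary. -/
def proj0 (x : V3) : V3 := ![x 0, x 1, 0]

/-- Reflection `x̄ = (x₁,x₂,−x₃)`. -/
def refl3 (x : V3) : V3 := ![x 0, x 1, -(x 2)]

/-- Time derivative `∂ₜ` of a space-time function. -/
def pdt (f : ℝ × V3 → ℝ) : ℝ × V3 → ℝ := fun q => fderiv ℝ f q (1, 0)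

/-- Spatial partial derivative `∂_{xᵢ}` of a space-time function. -/
def pdx (i : Fin 3) (f : ℝ × V3 → ℝ) : ℝ × V3 → ℝ := fun q => fderiv ℝ f q (0, Pi.single i 1)

/-- Partial derivative `∂_{xᵢ}` of a function on `ℝ³`. -/
def sdx (i : Fin 3) (u : V3 → ℝ) : V3 → ℝ := fun x => fderiv ℝ u x (Pi.single i 1)

/-- `i`-th component of a space-time vector field. -/
def comp3 (F : ℝ × V3 → V3) (i : Fin 3) : ℝ × V3 → ℝ := fun q => F q i

/-- Spatial divergence of a space-time vector field. -/
def divX (F : ℝ × V3 → V3) (q : ℝ × V3) : ℝ := ∑ i : Fin 3, pdx i (comp3 F i) q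

/-- Spatial curl of a space-time vector field. -/
def curlX (F : ℝ × V3 → V3) (q : ℝ × V3) : V3 :=
  ![pdx 1 (comp3 F 2) q - pdx 2 (comp3 F 1) q,
    pdx 2 (comp3 F 0) q - pdx 0 (comp3 F 2) q,
    pdx 0 (comp3 F 1) q - pdx 1 (comp3 F 0) q]

/-- Curl of a vector field on `ℝ³`. -/
def curlS (F : V3 → V3) (x : V3) : V3 :=
  ![sdx 1 (fun z => F z 2) x - sdx 2 (fun z => F z 1) x,
    sdx 2 (fun z => F z 0) x - sdx 0 (fun z => F z 2) x,
    sdx 0 (fun z => F z 1) x - sdx 1 (fun z => F z 0) x]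

/-- Divergence of a vector field on `ℝ³`. -/
def divS (F : V3 → V3) (x : V3) : ℝ := ∑ i : Fin 3, sdx i (fun z => F z i) x

/-- Spatial Laplacian of a space-time function. -/
def lapST (f : ℝ × V3 → ℝ) (q : ℝ × V3) : ℝ := ∑ i : Fin 3, pdx i (pdx i f) q

/-- Laplacian of a function on `ℝ³`. -/
def lapS (u : V3 → ℝ) (x : V3) : ℝ := ∑ i : Fin 3, sdx i (sdx i u) x

/-- Open space-time domain `(0,T) × Ω`. -/
def stDom (T : ℝ) : Set (ℝ × V3) := Ioo (0 : ℝ) T ×ˢ halfSpace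

/-- Closed space-time domain `[0,T] × Ω̄`. -/
def stDomCl (T : ℝ) : Set (ℝ × V3) := Icc (0 : ℝ) T ×ˢ closure halfSpace

/-- Lateral boundary domain `(0,T) × ∂Ω`, with `∂Ω ≃ ℝ²`. -/
def bDom (T : ℝ) : Set (ℝ × (ℝ × ℝ)) := Ioo (0 : ℝ) T ×ˢ (univ : Set (ℝ × ℝ))
/-!
Write `w = v̂`, `a = 1 + w·ω` and `ε = 1 - |w|² = ⟨v⟩⁻²`, so that the kernel is
`ε |wᵢ + ωᵢ| / a² ≤ ε |w + ω| / a²`. For `|w| < 1` and a unit vector `ω`, Cauchy–Schwarz gives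
`ε ≤ 2(1 - |w|) ≤ 2a` and `|w + ω|² = |w|² + 2 w·ω + 1 ≤ 2a`. Hence the square of the kernel is
at most `2ε²/a³ ≤ 16/ε`, i.e. the kernel is at most `4/√ε = 4⟨v⟩`.
-/

open RealInnerProductSpace

theorem mul_div_sq_le_four_div_sqrt {ε a u : ℝ} (hε : 0 < ε) (ha : 0 < a) (hεa : ε ≤ 2 * a)
    (hu : u ^ 2 ≤ 2 * a) : ε * u / a ^ 2 ≤ 4 / √ε := by
  have hε3 : ε ^ 3 ≤ 8 * a ^ 3 := by
    calc ε ^ 3 ≤ (2 * a) ^ 3 := by gcongr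
      _ = 8 * a ^ 3 := by ring
  have hsq : (ε * u / a ^ 2) ^ 2 ≤ 16 / ε := by
    rw [div_pow, mul_pow, div_le_div_iff₀ (by positivity) hε]
    nlinarith [mul_le_mul hε3 hu (sq_nonneg u) (by positivity)]
  calc ε * u / a ^ 2 ≤ √(16 / ε) := Real.le_sqrt_of_sq_le hsq
    _ = 4 / √ε := by
      rw [Real.sqrt_div' _ hε.le, show (16 : ℝ) = 4 ^ 2 by norm_num, Real.sqrt_sq (by norm_num)]

section InnerProductSpace

variable {E : Type*} [NormedAddCommGroup E] [InnerProductSpace ℝ E] {w ω : E}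

theorem neg_norm_le_inner_of_norm_eq_one (hω : ‖ω‖ = 1) : -‖w‖ ≤ ⟪w, ω⟫ := by
  simpa [hω] using neg_le_of_abs_le (abs_real_inner_le_norm w ω)

theorem one_add_inner_pos_of_norm_lt_one (hw : ‖w‖ < 1) (hω : ‖ω‖ = 1) : 0 < 1 + ⟪w, ω⟫ := by
  linarith [neg_norm_le_inner_of_norm_eq_one (w := w) hω]

theorem one_sub_norm_sq_le_two_mul_one_add_inner (hw : ‖w‖ ≤ 1) (hω : ‖ω‖ = 1) :
    1 - ‖w‖ ^ 2 ≤ 2 * (1 + ⟪w, ω⟫) := by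
  nlinarith [neg_norm_le_inner_of_norm_eq_one (w := w) hω, norm_nonneg w]

theorem norm_add_sq_le_two_mul_one_add_inner (hw : ‖w‖ ≤ 1) (hω : ‖ω‖ = 1) :
    ‖w + ω‖ ^ 2 ≤ 2 * (1 + ⟪w, ω⟫) := by
  rw [norm_add_sq_real, hω]
  nlinarith [norm_nonneg w]

theorem one_sub_norm_sq_mul_norm_add_div_sq_le (hw : ‖w‖ < 1) (hω : ‖ω‖ = 1) :
    (1 - ‖w‖ ^ 2) * ‖w + ω‖ / (1 + ⟪w, ω⟫) ^ 2 ≤ 4 / √(1 - ‖w‖ ^ 2) :=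
  mul_div_sq_le_four_div_sqrt (by nlinarith [norm_nonneg w])
    (one_add_inner_pos_of_norm_lt_one hw hω)
    (one_sub_norm_sq_le_two_mul_one_add_inner hw.le hω)
    (norm_add_sq_le_two_mul_one_add_inner hw.le hω)

end InnerProductSpace

theorem dot3_eq_inner (a b : V3) :
    dot3 a b = ⟪WithLp.toLp 2 a, (WithLp.toLp 2 b : EuclideanSpace ℝ (Fin 3))⟫ := by
  simp [dot3, PiLp.inner_apply, Fin.sum_univ_three, mul_comm]

theorem dot3_self_eq_norm_sq (a : V3) :
    dot3 a a = ‖(WithLp.toLp 2 a : EuclideanSpace ℝ (Fin 3))‖ ^ 2 := by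
  rw [dot3_eq_inner, real_inner_self_eq_norm_sq]

theorem dot3_self_nonneg (a : V3) : 0 ≤ dot3 a a := by
  rw [dot3_self_eq_norm_sq]; positivity

theorem one_sub_dot3_vhat_self (v : V3) : 1 - dot3 (vhat v) (vhat v) = (1 + dot3 v v)⁻¹ := by
  have hpos : 0 < 1 + dot3 v v := by linarith [dot3_self_nonneg v]
  have hjap : jap v ^ 2 = 1 + dot3 v v := Real.sq_sqrt hpos.le
  have hscale : dot3 (vhat v) (vhat v) = (jap v ^ 2)⁻¹ * dot3 v v := by
    simp only [vhat, dot3, Pi.smul_apply, smul_eq_mul]; ring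
  rw [hscale, hjap]
  field_simp
  ring

/-- Decay of the Glassey–Strauss electric bulk kernel. -/
theorem electric_bulk_kernel_decay (v ω : V3) (hω : enorm3 ω = 1) (i : Fin 3) :
    0 < 1 + dot3 (vhat v) ω ∧
    |(dot3 (vhat v) (vhat v) - 1) * (vhat v i + ω i)| / (1 + dot3 (vhat v) ω) ^ 2
      ≤ 4 * Real.sqrt (1 + dot3 v v) := by
  set w : EuclideanSpace ℝ (Fin 3) := WithLp.toLp 2 (vhat v)
  set e : EuclideanSpace ℝ (Fin 3) := WithLp.toLp 2 ω
  have he : ‖e‖ = 1 := by rwa [enorm3, dot3_self_eq_norm_sq, Real.sqrt_sq (norm_nonneg _)] at hω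
  have hε : 1 - ‖w‖ ^ 2 = (1 + dot3 v v)⁻¹ := by
    rw [← dot3_self_eq_norm_sq, one_sub_dot3_vhat_self]
  have hε_pos : 0 < 1 - ‖w‖ ^ 2 := by
    rw [hε]; exact inv_pos.mpr (by linarith [dot3_self_nonneg v])
  have hw : ‖w‖ < 1 := by nlinarith [norm_nonneg w]
  have hcoord : |vhat v i + ω i| ≤ ‖w + e‖ := PiLp.norm_apply_le (w + e) i
  rw [dot3_eq_inner (vhat v) ω]
  refine ⟨one_add_inner_pos_of_norm_lt_one hw he, ?_⟩
  calc |(dot3 (vhat v) (vhat v) - 1) * (vhat v i + ω i)| / (1 + ⟪w, e⟫) ^ 2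
      = (1 - ‖w‖ ^ 2) * |vhat v i + ω i| / (1 + ⟪w, e⟫) ^ 2 := by
        rw [abs_mul, dot3_self_eq_norm_sq, abs_sub_comm, abs_of_pos hε_pos]
    _ ≤ (1 - ‖w‖ ^ 2) * ‖w + e‖ / (1 + ⟪w, e⟫) ^ 2 := by gcongr
    _ ≤ 4 / √(1 - ‖w‖ ^ 2) := one_sub_norm_sq_mul_norm_add_div_sq_le hw he
    _ = 4 * √(1 + dot3 v v) := by rw [hε, Real.sqrt_inv, div_inv_eq_mul]
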